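/- arXiv:2209.03770 — 4 statements merged into one kernel-verified Lean document; each statement's English description precedes it below -/
import Mathlib

section
/- Let Π and Π' be graphs with vertex sets I, I'. Suppose A is a *-algebra containing self-adjoint idempotents v_{ij} for (i,j) ∈ I × I' satisfying the intertwining relation Σ_{k ∈ I': k ∼ j} v_{ik} = Σ_{k ∈ I: k ∼ i} v_{kj} (both sums finite) for all i ∈ I, j ∈ I', and the orthogonality relations v_{ik}v_{jk} = 0 = v_{ki}v_{kj} for i ≠ j. Then for all i, s ∈ I and t, j ∈ I': if (t ∼ j in Π' but i ≁ s in Π) or (i ∼ s in Π but t ≁ j in Π'), then v_{it} v_{sj} = 0. -/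
/-- If self-adjoint idempotents `v_{ij}` in a `*`-algebra satisfy the orthogonality
relations and the intertwining relation `Σ_{k∼j} v_{ik} = Σ_{k∼i} v_{kj}` for locally
finite graphs `Π`, `Π'`, then `v_{it} v_{sj} = 0` whenever exactly one of the relations
`t ∼ j` (in `Π'`) and `i ∼ s` (in `Π`) holds. -/
theorem stmt_5 {I I' A : Type*} [Ring A] [StarRing A]
    (adj : I → I → Prop) (adj' : I' → I' → Prop)
    (hsymm : ∀ i j, adj i j → adj j i) (hsymm' : ∀ i j, adj' i j → adj' j i)
    (hloc : ∀ i : I, {k | adj k i}.Finite) (hloc' : ∀ j : I', {k | adj' k j}.Finite)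
    (v : I → I' → A)
    (hsa : ∀ i j, star (v i j) = v i j)
    (hidem : ∀ i j, v i j * v i j = v i j)
    (horth : ∀ (i j : I) (k : I'), i ≠ j → v i k * v j k = 0)
    (horth' : ∀ (k : I) (i j : I'), i ≠ j → v k i * v k j = 0)
    (hint : ∀ (i : I) (j : I'),
      ∑ k ∈ (hloc' j).toFinset, v i k = ∑ k ∈ (hloc i).toFinset, v k j) :
    ∀ (i s : I) (t j : I'),
      ((adj' t j ∧ ¬ adj i s) ∨ (adj i s ∧ ¬ adj' t j)) → v i t * v s j = 0 := by
  intro i s t j h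
  classical
  have key := congrArg (fun x => v i t * x * v s j) (hint i j)
  simp only [Finset.mul_sum, Finset.sum_mul] at key
  have hL : ∑ k ∈ (hloc' j).toFinset, v i t * v i k * v s j
      = if adj' t j then v i t * v s j else 0 := by
    split_ifs with h1
    · rw [Finset.sum_eq_single_of_mem t (by simpa using h1)]
      · rw [hidem]
      · intro b _ hb
        rw [horth' i t b (Ne.symm hb), zero_mul]
    · apply Finset.sum_eq_zero
      intro b hb
      have hb' : adj' b j := by simpa using hb
      have : t ≠ b := fun e => h1 (e ▸ hb')
      rw [horth' i t b this, zero_mul]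
  have hR : ∑ k ∈ (hloc i).toFinset, v i t * v k j * v s j
      = if adj i s then v i t * v s j else 0 := by
    split_ifs with h1
    · rw [Finset.sum_eq_single_of_mem s (by simpa using hsymm i s h1)]
      · rw [mul_assoc, hidem]
      · intro b _ hb
        rw [mul_assoc, horth b s j hb, mul_zero]
    · apply Finset.sum_eq_zero
      intro b hb
      have hb' : adj b i := by simpa using hb
      have hbs : b ≠ s := fun e => h1 (hsymm s i (e ▸ hb'))
      rw [mul_assoc, horth b s j hbs, mul_zero]
  rw [hL, hR] at key
  rcases h with ⟨h1, h2⟩ | ⟨h1, h2⟩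
  · rw [if_pos h1, if_neg h2] at key
    exact key
  · rw [if_pos h1, if_neg h2] at key
    exact key.symm
end

section
/- Let Π and Π' be locally finite graphs with vertex sets I, I'. Suppose (v_{ij})_{(i,j) ∈ I × I'} are self-adjoint idempotents in a *-algebra satisfying v_{it} v_{sj} = 0 whenever exactly one of the relations i ∼ s (in Π) and t ∼ j (in Π') holds, together with the row/column summation identities Σ_{k∈I'} v_{ik} = 1 = Σ_{k∈I} v_{kj} (strictly). Then for every n ≥ 1 and all i, s ∈ I, j, t ∈ I', p_n(i,s) · v_{ij} v_{st} = p'_n(j,t) · v_{ij} v_{st}, where p_n(i,s) is the number of paths of length n from i to s in Π and p'_n(j,t) that in Π'. Consequently v_{ij} v_{st} = 0 whenever the graph distance d_Π(i,s) differs from d_{Π'}(j,t). -/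
open scoped ENNReal

/-- The number of paths of length `n` from `a` to `b` in the graph with adjacency `adj`. -/
noncomputable def pathCount6 {I : Type*} (adj : I → I → Prop) (n : ℕ) (a b : I) : ℕ :=
  Set.ncard {f : Fin (n + 1) → I |
    f 0 = a ∧ f (Fin.last n) = b ∧ ∀ m : Fin n, adj (f m.castSucc) (f m.succ)}

/-- The graph distance (minimal length of a path, `⊤` if none exists). -/
noncomputable def graphDist6 {I : Type*} (adj : I → I → Prop) (a b : I) : ℕ∞ :=
  ⨅ (n : ℕ) (_ : pathCount6 adj n a b ≠ 0), (n : ℕ∞)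


section PathAux
variable {I : Type*} (adj : I → I → Prop)

def pathSet6 (n : ℕ) (a b : I) : Set (Fin (n + 1) → I) :=
  {f | f 0 = a ∧ f (Fin.last n) = b ∧ ∀ m : Fin n, adj (f m.castSucc) (f m.succ)}

def fromSet6 (n : ℕ) (a : I) : Set (Fin (n + 1) → I) :=
  {f | f 0 = a ∧ ∀ m : Fin n, adj (f m.castSucc) (f m.succ)}

lemma fin1_eq_zero (x : Fin (0 + 1)) : x = 0 := by
  ext
  have := x.isLt
  omega

lemma pathCount6_eq (n : ℕ) (a b : I) :
    pathCount6 adj n a b = (pathSet6 adj n a b).ncard := rfl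

lemma pathSet6_subset (n : ℕ) (a b : I) : pathSet6 adj n a b ⊆ fromSet6 adj n a :=
  fun f hf => ⟨hf.1, hf.2.2⟩

lemma last_succ_eq (n : ℕ) : (Fin.last n).succ = Fin.last (n + 1) := by ext; simp

lemma castSucc_succ_eq {n : ℕ} (m : Fin n) : (m.succ).castSucc = (m.castSucc).succ := by
  ext; simp

lemma zero_castSucc (n : ℕ) : ((0 : Fin (n+1)).castSucc : Fin (n+2)) = 0 := by ext; simp

lemma zero_succ_eq_one (n : ℕ) : ((0 : Fin (n+1)).succ : Fin (n+2)) = 1 := by ext; simp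

lemma cons_mem_pathSet6 {n : ℕ} {a b i' : I} (ha : adj a i') {g : Fin (n + 1) → I}
    (hg : g ∈ pathSet6 adj n i' b) : Fin.cons a g ∈ pathSet6 adj (n + 1) a b := by
  obtain ⟨hg0, hgl, hgadj⟩ := hg
  refine ⟨Fin.cons_zero _ _, ?_, ?_⟩
  · rw [← last_succ_eq, Fin.cons_succ]; exact hgl
  · intro m
    induction m using Fin.cases with
    | zero =>
      rw [zero_castSucc, zero_succ_eq_one, Fin.cons_zero]
      have : (1 : Fin (n+2)) = (0 : Fin (n+1)).succ := by ext; simp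
      rw [this, Fin.cons_succ, hg0]; exact ha
    | succ k =>
      rw [castSucc_succ_eq, Fin.cons_succ, Fin.cons_succ]
      exact hgadj k

lemma tail_mem_pathSet6 {n : ℕ} {a b : I} {f : Fin (n + 2) → I}
    (hf : f ∈ pathSet6 adj (n + 1) a b) :
    adj a (f 1) ∧ Fin.tail f ∈ pathSet6 adj n (f 1) b := by
  obtain ⟨hf0, hfl, hfadj⟩ := hf
  constructor
  · have := hfadj 0
    rw [zero_castSucc, zero_succ_eq_one, hf0] at this; exact this
  · refine ⟨rfl, ?_, ?_⟩
    · show f (Fin.last n).succ = b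
      rw [last_succ_eq]; exact hfl
    · intro m
      have := hfadj m.succ
      rw [castSucc_succ_eq] at this
      exact this

lemma head_adj6 {n : ℕ} {a : I} {f : Fin (n + 2) → I}
    (hf : f ∈ fromSet6 adj (n + 1) a) : adj a (f 1) := by
  have := hf.2 0
  rw [zero_castSucc, zero_succ_eq_one, hf.1] at this; exact this

lemma tail_mem_fromSet6 {n : ℕ} {a : I} {f : Fin (n + 2) → I}
    (hf : f ∈ fromSet6 adj (n + 1) a) : Fin.tail f ∈ fromSet6 adj n (f 1) := by
  refine ⟨rfl, fun m => ?_⟩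
  have := hf.2 m.succ
  rw [castSucc_succ_eq] at this
  exact this

lemma fromSet6_finite (hfin : ∀ a : I, {k | adj a k}.Finite) :
    ∀ (n : ℕ) (a : I), (fromSet6 adj n a).Finite := by
  intro n
  induction n with
  | zero =>
    intro a
    apply Set.Finite.subset (Set.finite_singleton (fun _ => a))
    intro f hf
    have : ∀ x : Fin 1, f x = a := fun x => by
      rw [fin1_eq_zero x]; exact hf.1
    exact funext this
  | succ n ih =>
    intro a
    have himg : Fin.tail '' (fromSet6 adj (n+1) a) ⊆
        ⋃ i' ∈ {k | adj a k}, fromSet6 adj n i' := by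
      rintro g ⟨f, hf, rfl⟩
      exact Set.mem_biUnion (head_adj6 adj hf) (tail_mem_fromSet6 adj hf)
    have hUfin : (⋃ i' ∈ {k | adj a k}, fromSet6 adj n i').Finite :=
      Set.Finite.biUnion (hfin a) (fun i' _ => ih i')
    have hinj : Set.InjOn Fin.tail (fromSet6 adj (n+1) a) := by
      intro f hf g hg h
      have : Fin.cons (f 0) (Fin.tail f) = Fin.cons (g 0) (Fin.tail g) := by
        rw [hf.1, hg.1, h]
      rwa [Fin.cons_self_tail, Fin.cons_self_tail] at this
    exact Set.Finite.of_finite_image (hUfin.subset himg) hinj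

lemma pathSet6_finite (hfin : ∀ a : I, {k | adj a k}.Finite) (n : ℕ) (a b : I) :
    (pathSet6 adj n a b).Finite :=
  (fromSet6_finite adj hfin n a).subset (pathSet6_subset adj n a b)

lemma pathCount6_ne_zero_iff (hfin : ∀ a : I, {k | adj a k}.Finite) (n : ℕ) (a b : I) :
    pathCount6 adj n a b ≠ 0 ↔ (pathSet6 adj n a b).Nonempty := by
  constructor
  · intro h; exact Set.nonempty_of_ncard_ne_zero h
  · intro h
    rw [pathCount6_eq]
    exact ((Set.ncard_pos (pathSet6_finite adj hfin n a b)).mpr h).ne'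

lemma pathSet6_zero_self (a : I) : pathSet6 adj 0 a a = {fun _ => a} := by
  ext f
  constructor
  · intro hf
    refine funext fun x => ?_
    rw [fin1_eq_zero x]; exact hf.1
  · rintro rfl
    exact ⟨rfl, rfl, fun m => m.elim0⟩

lemma pathCount6_zero_self (a : I) : pathCount6 adj 0 a a = 1 := by
  rw [pathCount6_eq, pathSet6_zero_self, Set.ncard_singleton]

lemma pathSet6_zero_ne {a b : I} (h : a ≠ b) : pathSet6 adj 0 a b = ∅ := by
  ext f
  simp only [Set.mem_empty_iff_false, iff_false]
  intro hf
  apply h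
  have h2 : f (Fin.last 0) = f 0 := by rw [fin1_eq_zero (Fin.last 0)]
  rw [← hf.1, ← hf.2.1, h2]

lemma pathCount6_zero_ne {a b : I} (h : a ≠ b) : pathCount6 adj 0 a b = 0 := by
  rw [pathCount6_eq, pathSet6_zero_ne adj h, Set.ncard_empty]

lemma rev_mem_pathSet6 (hsymm : ∀ i j, adj i j → adj j i) {n : ℕ} {a b : I}
    {f : Fin (n + 1) → I} (hf : f ∈ pathSet6 adj n a b) :
    (fun k => f k.rev) ∈ pathSet6 adj n b a := by
  obtain ⟨hf0, hfl, hfadj⟩ := hf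
  refine ⟨?_, ?_, ?_⟩
  · show f (Fin.rev 0) = b
    rw [Fin.rev_zero]; exact hfl
  · show f (Fin.last n).rev = a
    rw [Fin.rev_last]; exact hf0
  · intro m
    show adj (f m.castSucc.rev) (f m.succ.rev)
    rw [Fin.rev_castSucc, Fin.rev_succ]
    exact hsymm _ _ (hfadj m.rev)

lemma pathCount6_symm (hsymm : ∀ i j, adj i j → adj j i) (n : ℕ) (a b : I) :
    pathCount6 adj n a b = pathCount6 adj n b a := by
  have hinj : Function.Injective (fun (f : Fin (n+1) → I) => (fun (k : Fin (n+1)) => f k.rev)) := by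
    apply Function.Involutive.injective
    intro f
    funext k
    show f k.rev.rev = f k
    rw [Fin.rev_rev]
  have himg : pathSet6 adj n b a =
      (fun (f : Fin (n+1) → I) => (fun (k : Fin (n+1)) => f k.rev)) '' pathSet6 adj n a b := by
    apply Set.Subset.antisymm
    · intro g hg
      refine ⟨fun (k : Fin (n+1)) => g k.rev, rev_mem_pathSet6 adj hsymm hg, ?_⟩
      funext k
      show g k.rev.rev = g k
      rw [Fin.rev_rev]
    · rintro g ⟨f, hf, rfl⟩
      exact rev_mem_pathSet6 adj hsymm hf
  rw [pathCount6_eq, pathCount6_eq adj n b a, himg, Set.ncard_image_of_injective _ hinj]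

lemma ncard_biUnion6 {ι α : Type*} (F : Finset ι) (P : ι → Set α)
    (hfin : ∀ i ∈ F, (P i).Finite)
    (hdisj : ∀ i ∈ F, ∀ j ∈ F, i ≠ j → Disjoint (P i) (P j)) :
    (⋃ i ∈ F, P i).ncard = ∑ i ∈ F, (P i).ncard := by
  classical
  induction F using Finset.induction with
  | empty => simp
  | @insert a s ha ih =>
    rw [Finset.set_biUnion_insert, Finset.sum_insert ha]
    have h1 : (⋃ i ∈ s, P i).Finite :=
      Set.Finite.biUnion s.finite_toSet (fun i hi => hfin i (Finset.mem_insert_of_mem hi))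
    have h2 : Disjoint (P a) (⋃ i ∈ s, P i) := by
      rw [Set.disjoint_iUnion₂_right]
      intro i hi
      exact hdisj a (Finset.mem_insert_self a s) i (Finset.mem_insert_of_mem hi)
        (fun h => ha (h ▸ hi))
    rw [Set.ncard_union_eq h2 (hfin a (Finset.mem_insert_self a s)) h1,
      ih (fun i hi => hfin i (Finset.mem_insert_of_mem hi))
        (fun i hi j hj hij => hdisj i (Finset.mem_insert_of_mem hi) j
          (Finset.mem_insert_of_mem hj) hij)]

lemma pathSet6_succ_eq (n : ℕ) (i s : I) (F : Finset I) (hF : ∀ k, adj i k ↔ k ∈ F) :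
    pathSet6 adj (n+1) i s = (fun g : Fin (n+1) → I => (Fin.cons i g : Fin (n+2) → I)) '' (⋃ i' ∈ F, pathSet6 adj n i' s) := by
  apply Set.Subset.antisymm
  · intro f hf
    obtain ⟨hadj, htail⟩ := tail_mem_pathSet6 adj hf
    refine ⟨Fin.tail f, Set.mem_biUnion ((hF _).1 hadj) htail, ?_⟩
    have := Fin.cons_self_tail f
    rw [hf.1] at this
    exact this
  · rintro f ⟨g, hg, rfl⟩
    rw [Set.mem_iUnion₂] at hg
    obtain ⟨i', hi', hgmem⟩ := hg
    exact cons_mem_pathSet6 adj ((hF i').2 hi') hgmem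

lemma pathCount6_succ (hfin : ∀ a : I, {k | adj a k}.Finite) (n : ℕ) (i s : I)
    (F : Finset I) (hF : ∀ k, adj i k ↔ k ∈ F) :
    pathCount6 adj (n+1) i s = ∑ i' ∈ F, pathCount6 adj n i' s := by
  have hinj : Function.Injective (fun g : Fin (n+1) → I => (Fin.cons i g : Fin (n+2) → I)) := by
    intro g1 g2 h
    have := congrArg Fin.tail h
    rwa [Fin.tail_cons, Fin.tail_cons] at this
  have hdisj : ∀ x ∈ F, ∀ y ∈ F, x ≠ y → Disjoint (pathSet6 adj n x s) (pathSet6 adj n y s) := by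
    intro x _ y _ hxy
    rw [Set.disjoint_left]
    intro g hgx hgy
    exact hxy (hgx.1 ▸ hgy.1 ▸ rfl)
  rw [pathCount6_eq, pathSet6_succ_eq adj n i s F hF,
    Set.ncard_image_of_injective _ hinj,
    ncard_biUnion6 F _ (fun i' _ => pathSet6_finite adj hfin n i' s) hdisj]
  rfl

lemma support_right_finite6 (hfin : ∀ a : I, {k | adj a k}.Finite) (n : ℕ) (a : I) :
    {b | pathCount6 adj n a b ≠ 0}.Finite := by
  apply Set.Finite.subset (Set.Finite.image (fun f => f (Fin.last n)) (fromSet6_finite adj hfin n a))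
  intro b hb
  obtain ⟨f, hf⟩ := Set.nonempty_of_ncard_ne_zero hb
  exact ⟨f, pathSet6_subset adj n a b hf, hf.2.1⟩

lemma support_left_finite6 (hsymm : ∀ i j, adj i j → adj j i)
    (hfin : ∀ a : I, {k | adj a k}.Finite) (n : ℕ) (b : I) :
    {a | pathCount6 adj n a b ≠ 0}.Finite := by
  have : {a | pathCount6 adj n a b ≠ 0} = {a | pathCount6 adj n b a ≠ 0} := by
    ext a
    simp only [Set.mem_setOf_eq, pathCount6_symm adj hsymm n a b]
  rw [this]
  exact support_right_finite6 adj hfin n b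

end PathAux

section Alg
variable {I I' A : Type*} [Ring A]

/-- Row-times-column-sum identity: if `adj' t j` then `v i t * (∑ neighbors) = v i t`. -/
lemma mulNbrSum_of_adj (adj : I → I → Prop) (adj' : I' → I' → Prop) (v : I → I' → A)
    (hzero : ∀ (i s : I) (t j : I'),
      ((adj' t j ∧ ¬ adj i s) ∨ (adj i s ∧ ¬ adj' t j)) → v i t * v s j = 0)
    (hcol : ∀ (a : A) (j : I'), ∃ F : Finset I,
      (∀ k ∉ F, v k j * a = 0 ∧ a * v k j = 0) ∧
      (∑ k ∈ F, v k j * a) = a ∧ (∑ k ∈ F, a * v k j) = a)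
    (i : I) (Nf : Finset I) (hNf : ∀ k, adj i k ↔ k ∈ Nf)
    {t j : I'} (ht : adj' t j) :
    v i t * (∑ s ∈ Nf, v s j) = v i t := by
  classical
  obtain ⟨F, hFout, _, hF2⟩ := hcol (v i t) j
  rw [Finset.mul_sum]
  have h1 : ∑ s ∈ Nf ∩ F, v i t * v s j = ∑ s ∈ Nf, v i t * v s j := by
    apply Finset.sum_subset Finset.inter_subset_left
    intro s hs hns
    have hsF : s ∉ F := fun hsF => hns (Finset.mem_inter.mpr ⟨hs, hsF⟩)
    exact (hFout s hsF).2
  have h2 : ∑ s ∈ Nf ∩ F, v i t * v s j = ∑ s ∈ F, v i t * v s j := by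
    apply Finset.sum_subset Finset.inter_subset_right
    intro s hs hns
    have hsN : s ∉ Nf := fun hsN => hns (Finset.mem_inter.mpr ⟨hsN, hs⟩)
    exact hzero i s t j (Or.inl ⟨ht, fun ha => hsN ((hNf s).1 ha)⟩)
  rw [← h1, h2, hF2]

lemma mulNbrSum_of_not_adj (adj : I → I → Prop) (adj' : I' → I' → Prop) (v : I → I' → A)
    (hzero : ∀ (i s : I) (t j : I'),
      ((adj' t j ∧ ¬ adj i s) ∨ (adj i s ∧ ¬ adj' t j)) → v i t * v s j = 0)
    (i : I) (Nf : Finset I) (hNf : ∀ k, adj i k ↔ k ∈ Nf)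
    {t j : I'} (ht : ¬ adj' t j) :
    v i t * (∑ s ∈ Nf, v s j) = 0 := by
  rw [Finset.mul_sum]
  apply Finset.sum_eq_zero
  intro s hs
  exact hzero i s t j (Or.inr ⟨(hNf s).2 hs, ht⟩)

/-- The intertwining identity `∑_{s ∼ i} v_{sj} = ∑_{t ∼ j} v_{it}`. -/
lemma nbrSum_identity (adj : I → I → Prop) (adj' : I' → I' → Prop) (v : I → I' → A)
    (hzero : ∀ (i s : I) (t j : I'),
      ((adj' t j ∧ ¬ adj i s) ∨ (adj i s ∧ ¬ adj' t j)) → v i t * v s j = 0)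
    (hrow : ∀ (a : A) (i : I), ∃ F : Finset I',
      (∀ k ∉ F, v i k * a = 0 ∧ a * v i k = 0) ∧
      (∑ k ∈ F, v i k * a) = a ∧ (∑ k ∈ F, a * v i k) = a)
    (hcol : ∀ (a : A) (j : I'), ∃ F : Finset I,
      (∀ k ∉ F, v k j * a = 0 ∧ a * v k j = 0) ∧
      (∑ k ∈ F, v k j * a) = a ∧ (∑ k ∈ F, a * v k j) = a)
    (i : I) (Nf : Finset I) (hNf : ∀ k, adj i k ↔ k ∈ Nf)
    (j : I') (Nf' : Finset I') (hNf' : ∀ k, adj' k j ↔ k ∈ Nf') :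
    ∑ s ∈ Nf, v s j = ∑ t ∈ Nf', v i t := by
  classical
  set b := ∑ s ∈ Nf, v s j with hb
  obtain ⟨F, hFout, hF1, _⟩ := hrow b i
  have h1 : ∑ t ∈ F ∩ Nf', v i t * b = ∑ t ∈ F, v i t * b := by
    apply Finset.sum_subset Finset.inter_subset_left
    intro t htF htn
    have htN : t ∉ Nf' := fun htN => htn (Finset.mem_inter.mpr ⟨htF, htN⟩)
    exact mulNbrSum_of_not_adj adj adj' v hzero i Nf hNf (fun ha => htN ((hNf' t).1 ha))
  have h2 : ∑ t ∈ F ∩ Nf', v i t * b = ∑ t ∈ F ∩ Nf', v i t := by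
    apply Finset.sum_congr rfl
    intro t htm
    exact mulNbrSum_of_adj adj adj' v hzero hcol i Nf hNf
      ((hNf' t).2 (Finset.mem_inter.mp htm).2)
  have h3 : ∑ t ∈ F ∩ Nf', v i t = ∑ t ∈ Nf', v i t := by
    apply Finset.sum_subset Finset.inter_subset_right
    intro t htm htn
    have htF : t ∉ F := fun htF => htn (Finset.mem_inter.mpr ⟨htF, htm⟩)
    have : v i t * b = 0 := (hFout t htF).1
    rw [← mulNbrSum_of_adj adj adj' v hzero hcol i Nf hNf ((hNf' t).2 htm)]
    exact this
  rw [← h3, ← h2, h1, hF1]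

/-- Vanishing lemma: if a path `i → s` of length `n` exists but no path `j → t` of
length `n` exists, then `v i j * v s t = 0`. -/
lemma keyVan6 (adj : I → I → Prop) (adj' : I' → I' → Prop) (v : I → I' → A)
    (horth' : ∀ (k : I) (t1 t2 : I'), t1 ≠ t2 → v k t1 * v k t2 = 0)
    (hz : ∀ (i s : I) (j t : I'), adj i s → ¬ adj' j t → v i j * v s t = 0)
    (hrow : ∀ (a : A) (i : I), ∃ F : Finset I',
      (∀ k ∉ F, v i k * a = 0 ∧ a * v i k = 0) ∧
      (∑ k ∈ F, v i k * a) = a ∧ (∑ k ∈ F, a * v i k) = a) :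
    ∀ (n : ℕ) (i s : I) (j t : I'), (pathSet6 adj n i s).Nonempty →
      (∀ g, g ∉ pathSet6 adj' n j t) → v i j * v s t = 0 := by
  intro n
  induction n with
  | zero =>
    intro i s j t hne hempty
    obtain ⟨f, hf⟩ := hne
    have his : i = s := by
      rw [← hf.1, ← hf.2.1, fin1_eq_zero (Fin.last 0)]
    have hjt : j ≠ t := by
      rintro rfl
      exact hempty (fun _ => j) ⟨rfl, rfl, fun m => m.elim0⟩
    rw [← his]
    exact horth' i j t hjt
  | succ n ih =>
    intro i s j t hne hempty
    obtain ⟨f, hf⟩ := hne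
    obtain ⟨hadj, htail⟩ := tail_mem_pathSet6 adj hf
    set i₁ := f 1 with hi₁
    obtain ⟨F, hFout, hF1, _⟩ := hrow (v s t) i₁
    calc v i j * v s t = v i j * ∑ j' ∈ F, v i₁ j' * v s t := by rw [hF1]
      _ = ∑ j' ∈ F, v i j * (v i₁ j' * v s t) := by rw [Finset.mul_sum]
      _ = 0 := by
        apply Finset.sum_eq_zero
        intro j' _
        by_cases hadj' : adj' j j'
        · have hem : ∀ g, g ∉ pathSet6 adj' n j' t := by
            intro g hg
            exact hempty (Fin.cons j g) (cons_mem_pathSet6 adj' hadj' hg)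
          rw [ih i₁ s j' t ⟨Fin.tail f, htail⟩ hem, mul_zero]
        · rw [← mul_assoc, hz i i₁ j j' hadj hadj', zero_mul]

end Alg


/-- For self-adjoint idempotents `v_{ij}` with `v_{it} v_{sj} = 0` whenever exactly one
of the adjacencies holds, and with rows/columns summing strictly to `1`, one has
`p_n(i,s)·v_{ij}v_{st} = p'_n(j,t)·v_{ij}v_{st}` for all `n ≥ 1`, and consequently
`v_{ij}v_{st} = 0` whenever the graph distances `d_Π(i,s)` and `d_{Π'}(j,t)` differ. -/
theorem stmt_6 {I I' A : Type*} [Ring A] [StarRing A]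
    (adj : I → I → Prop) (adj' : I' → I' → Prop)
    (hsymm : ∀ i j, adj i j → adj j i) (hsymm' : ∀ i j, adj' i j → adj' j i)
    (hloc : ∀ i : I, {k | adj k i}.Finite) (hloc' : ∀ j : I', {k | adj' k j}.Finite)
    (v : I → I' → A)
    (hsa : ∀ i j, star (v i j) = v i j)
    (hidem : ∀ i j, v i j * v i j = v i j)
    (horth : ∀ (i j : I) (k : I'), i ≠ j → v i k * v j k = 0)
    (horth' : ∀ (k : I) (i j : I'), i ≠ j → v k i * v k j = 0)
    (hzero : ∀ (i s : I) (t j : I'),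
      ((adj' t j ∧ ¬ adj i s) ∨ (adj i s ∧ ¬ adj' t j)) → v i t * v s j = 0)
    (hrow : ∀ (a : A) (i : I), ∃ F : Finset I',
      (∀ k ∉ F, v i k * a = 0 ∧ a * v i k = 0) ∧
      (∑ k ∈ F, v i k * a) = a ∧ (∑ k ∈ F, a * v i k) = a)
    (hcol : ∀ (a : A) (j : I'), ∃ F : Finset I,
      (∀ k ∉ F, v k j * a = 0 ∧ a * v k j = 0) ∧
      (∑ k ∈ F, v k j * a) = a ∧ (∑ k ∈ F, a * v k j) = a) :
    (∀ n : ℕ, 1 ≤ n → ∀ (i s : I) (j t : I'),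
      pathCount6 adj n i s • (v i j * v s t) = pathCount6 adj' n j t • (v i j * v s t)) ∧
    (∀ (i s : I) (j t : I'),
      graphDist6 adj i s ≠ graphDist6 adj' j t → v i j * v s t = 0) := by
  classical
  have hfin : ∀ a : I, {k | adj a k}.Finite :=
    fun a => (hloc a).subset (fun k hk => hsymm a k hk)
  have hfin' : ∀ a : I', {k | adj' a k}.Finite :=
    fun a => (hloc' a).subset (fun k hk => hsymm' a k hk)
  set N : I → Finset I := fun a => (hfin a).toFinset with hNdef
  set N' : I' → Finset I' := fun a => (hfin' a).toFinset with hN'def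
  have hN : ∀ a k, adj a k ↔ k ∈ N a := fun a k => ((hfin a).mem_toFinset).symm
  have hN' : ∀ a k, adj' a k ↔ k ∈ N' a := fun a k => ((hfin' a).mem_toFinset).symm
  set SL : ℕ → I → Finset I :=
    fun n i => (support_right_finite6 adj hfin n i).toFinset with hSLdef
  have hSL : ∀ n i s, s ∈ SL n i ↔ pathCount6 adj n i s ≠ 0 :=
    fun n i s => (support_right_finite6 adj hfin n i).mem_toFinset
  set SR : ℕ → I' → Finset I' :=
    fun n t => (support_left_finite6 adj' hsymm' hfin' n t).toFinset with hSRdef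
  have hSR : ∀ n t j, j ∈ SR n t ↔ pathCount6 adj' n j t ≠ 0 :=
    fun n t j => (support_left_finite6 adj' hsymm' hfin' n t).mem_toFinset
  -- sums over any covering finset equal sum over support
  have sumLe : ∀ (n : ℕ) (i : I) (t : I') (S : Finset I),
      (∀ s, pathCount6 adj n i s ≠ 0 → s ∈ S) →
      ∑ s ∈ S, pathCount6 adj n i s • v s t = ∑ s ∈ SL n i, pathCount6 adj n i s • v s t := by
    intro n i t S hS
    refine (Finset.sum_subset (fun s hs => hS s ((hSL n i s).1 hs)) ?_).symm
    intro s _ hs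
    rw [not_not.1 (fun h => hs ((hSL n i s).2 h)), zero_smul]
  have sumRe : ∀ (n : ℕ) (i : I) (t : I') (T : Finset I'),
      (∀ j, pathCount6 adj' n j t ≠ 0 → j ∈ T) →
      ∑ j ∈ T, pathCount6 adj' n j t • v i j = ∑ j ∈ SR n t, pathCount6 adj' n j t • v i j := by
    intro n i t T hT
    refine (Finset.sum_subset (fun j hj => hT j ((hSR n t j).1 hj)) ?_).symm
    intro j _ hj
    rw [not_not.1 (fun h => hj ((hSR n t j).2 h)), zero_smul]
  -- the intertwining identity
  have hstar : ∀ (i : I) (j : I'), ∑ s ∈ N i, v s j = ∑ t ∈ N' j, v i t := by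
    intro i j
    refine nbrSum_identity adj adj' v hzero hrow hcol i (N i) (hN i) j (N' j) ?_
    intro k
    rw [← hN' j k]
    exact ⟨hsymm' k j, hsymm' j k⟩
  -- the key summation identity
  have key : ∀ (n : ℕ) (i : I) (t : I'),
      ∑ s ∈ SL n i, pathCount6 adj n i s • v s t
        = ∑ j ∈ SR n t, pathCount6 adj' n j t • v i j := by
    intro n
    induction n with
    | zero =>
      intro i t
      have hSL0 : SL 0 i = {i} := by
        ext s
        rw [hSL, Finset.mem_singleton]
        constructor
        · intro h
          by_contra hne
          exact h (pathCount6_zero_ne adj (fun he => hne he.symm))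
        · rintro rfl
          rw [pathCount6_zero_self adj]
          exact one_ne_zero
      have hSR0 : SR 0 t = {t} := by
        ext j
        rw [hSR, Finset.mem_singleton]
        constructor
        · intro h
          by_contra hne
          exact h (pathCount6_zero_ne adj' hne)
        · rintro rfl
          rw [pathCount6_zero_self adj']
          exact one_ne_zero
      rw [hSL0, hSR0, Finset.sum_singleton, Finset.sum_singleton,
        pathCount6_zero_self adj, pathCount6_zero_self adj']
    | succ n ih =>
      intro i t
      set S : Finset I := (N i).biUnion (fun i' => SL n i') with hSdef
      have hScov : ∀ s, pathCount6 adj (n+1) i s ≠ 0 → s ∈ S := by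
        intro s hs
        rw [pathCount6_succ adj hfin n i s (N i) (hN i)] at hs
        obtain ⟨i', hi', hne⟩ := Finset.exists_ne_zero_of_sum_ne_zero hs
        exact Finset.mem_biUnion.mpr ⟨i', hi', (hSL n i' s).2 hne⟩
      set U : Finset I' := (SR n t).biUnion (fun j => N' j) with hUdef
      have hUcov : ∀ j', pathCount6 adj' (n+1) j' t ≠ 0 → j' ∈ U := by
        intro j' hj'
        rw [pathCount6_succ adj' hfin' n j' t (N' j') (hN' j')] at hj'
        obtain ⟨j, hj, hne⟩ := Finset.exists_ne_zero_of_sum_ne_zero hj'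
        refine Finset.mem_biUnion.mpr ⟨j, (hSR n t j).2 hne, ?_⟩
        exact (hN' j j').1 (hsymm' j' j ((hN' j' j).2 hj))
      calc ∑ s ∈ SL (n+1) i, pathCount6 adj (n+1) i s • v s t
          = ∑ s ∈ S, pathCount6 adj (n+1) i s • v s t := (sumLe (n+1) i t S hScov).symm
        _ = ∑ s ∈ S, ∑ i' ∈ N i, pathCount6 adj n i' s • v s t := by
            apply Finset.sum_congr rfl
            intro s _
            rw [pathCount6_succ adj hfin n i s (N i) (hN i), Finset.sum_smul]
        _ = ∑ i' ∈ N i, ∑ s ∈ S, pathCount6 adj n i' s • v s t := Finset.sum_comm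
        _ = ∑ i' ∈ N i, ∑ j ∈ SR n t, pathCount6 adj' n j t • v i' j := by
            apply Finset.sum_congr rfl
            intro i' hi'
            rw [sumLe n i' t S (fun s hs => Finset.mem_biUnion.mpr ⟨i', hi', (hSL n i' s).2 hs⟩)]
            exact ih i' t
        _ = ∑ j ∈ SR n t, ∑ i' ∈ N i, pathCount6 adj' n j t • v i' j := Finset.sum_comm
        _ = ∑ j ∈ SR n t, ∑ t' ∈ N' j, pathCount6 adj' n j t • v i t' := by
            apply Finset.sum_congr rfl
            intro j _
            rw [← Finset.smul_sum, ← Finset.smul_sum, hstar i j]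
        _ = ∑ j ∈ SR n t, ∑ t' ∈ U,
              (if adj' j t' then pathCount6 adj' n j t else 0) • v i t' := by
            apply Finset.sum_congr rfl
            intro j hj
            have hsub : N' j ⊆ U := fun t' ht' => Finset.mem_biUnion.mpr ⟨j, hj, ht'⟩
            have : ∀ t' ∈ U, (if adj' j t' then pathCount6 adj' n j t else 0) • v i t'
                = if t' ∈ N' j then pathCount6 adj' n j t • v i t' else 0 := by
              intro t' _
              by_cases h : adj' j t'
              · rw [if_pos h, if_pos ((hN' j t').1 h)]
              · rw [if_neg h, if_neg (fun hm => h ((hN' j t').2 hm)), zero_smul]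
            rw [Finset.sum_congr rfl this, Finset.sum_ite_mem,
              Finset.inter_eq_right.mpr hsub]
        _ = ∑ t' ∈ U, ∑ j ∈ SR n t,
              (if adj' j t' then pathCount6 adj' n j t else 0) • v i t' := Finset.sum_comm
        _ = ∑ t' ∈ U, pathCount6 adj' (n+1) t' t • v i t' := by
            apply Finset.sum_congr rfl
            intro t' _
            rw [← Finset.sum_smul]
            congr 1
            rw [pathCount6_succ adj' hfin' n t' t (N' t') (hN' t')]
            have : ∀ j ∈ SR n t, (if adj' j t' then pathCount6 adj' n j t else 0)
                = if j ∈ N' t' then pathCount6 adj' n j t else 0 := by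
              intro j _
              by_cases h : adj' j t'
              · rw [if_pos h, if_pos ((hN' t' j).1 (hsymm' j t' h))]
              · rw [if_neg h, if_neg (fun hm => h (hsymm' t' j ((hN' t' j).2 hm)))]
            rw [Finset.sum_congr rfl this, Finset.sum_ite_mem]
            apply Finset.sum_subset Finset.inter_subset_right
            intro j hj hnj
            have : j ∉ SR n t := fun hm => hnj (Finset.mem_inter.mpr ⟨hm, hj⟩)
            exact not_not.1 (fun h => this ((hSR n t j).2 h))
        _ = ∑ j ∈ SR (n+1) t, pathCount6 adj' (n+1) j t • v i j := sumRe (n+1) i t U hUcov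
  constructor
  · -- part 1
    intro n _ i s j t
    have hkey := key n i t
    have hL : v i j * ((∑ s' ∈ SL n i, pathCount6 adj n i s' • v s' t) * v s t)
        = pathCount6 adj n i s • (v i j * v s t) := by
      rw [Finset.sum_mul]
      have : ∀ s' ∈ SL n i, (pathCount6 adj n i s' • v s' t) * v s t
          = if s' = s then pathCount6 adj n i s' • v s t else 0 := by
        intro s' _
        by_cases h : s' = s
        · subst h
          rw [if_pos rfl, smul_mul_assoc, hidem]
        · rw [if_neg h, smul_mul_assoc, horth s' s t h, smul_zero]
      rw [Finset.sum_congr rfl this, Finset.sum_ite_eq' (SL n i) s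
        (fun s' => pathCount6 adj n i s' • v s t)]
      by_cases hs : s ∈ SL n i
      · rw [if_pos hs, mul_smul_comm]
      · rw [if_neg hs, mul_zero, not_not.1 (fun h => hs ((hSL n i s).2 h)), zero_smul]
    have hR : v i j * ((∑ j' ∈ SR n t, pathCount6 adj' n j' t • v i j') * v s t)
        = pathCount6 adj' n j t • (v i j * v s t) := by
      rw [Finset.sum_mul, Finset.mul_sum]
      have : ∀ j' ∈ SR n t, v i j * ((pathCount6 adj' n j' t • v i j') * v s t)
          = if j' = j then pathCount6 adj' n j' t • (v i j * v s t) else 0 := by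
        intro j' _
        by_cases h : j' = j
        · subst h
          rw [if_pos rfl, smul_mul_assoc, mul_smul_comm, ← mul_assoc, hidem]
        · rw [if_neg h, smul_mul_assoc, mul_smul_comm, ← mul_assoc,
            horth' i j j' (fun he => h he.symm), zero_mul, smul_zero]
      rw [Finset.sum_congr rfl this, Finset.sum_ite_eq' (SR n t) j
        (fun j' => pathCount6 adj' n j' t • (v i j * v s t))]
      by_cases hj : j ∈ SR n t
      · rw [if_pos hj]
      · rw [if_neg hj, not_not.1 (fun h => hj ((hSR n t j).2 h)), zero_smul]
    rw [← hL, ← hR, hkey]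
  · -- part 2
    intro i s j t hne
    rcases lt_trichotomy (graphDist6 adj i s) (graphDist6 adj' j t) with h | h | h
    · -- d < d'
      have hNs : {m | pathCount6 adj m i s ≠ 0}.Nonempty := by
        by_contra hc
        rw [Set.not_nonempty_iff_eq_empty] at hc
        have htop : graphDist6 adj i s = ⊤ := by
          rw [graphDist6, iInf_eq_top]
          intro m
          rw [iInf_eq_top]
          intro hm
          exact absurd (Set.eq_empty_iff_forall_notMem.mp hc m hm) (fun h => h)
        rw [htop] at h
        exact absurd h (not_lt.mpr le_top)
      set n := sInf {m | pathCount6 adj m i s ≠ 0} with hndef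
      have hn : pathCount6 adj n i s ≠ 0 := Nat.sInf_mem hNs
      have hle : (n : ℕ∞) ≤ graphDist6 adj i s := by
        rw [graphDist6]
        refine le_iInf fun m => le_iInf fun hm => ?_
        exact_mod_cast Nat.sInf_le hm
      have hz' : pathCount6 adj' n j t = 0 := by
        by_contra hc
        have hle' : graphDist6 adj' j t ≤ (n : ℕ∞) := by
          rw [graphDist6]
          exact iInf_le_of_le n (iInf_le _ hc)
        exact absurd h (not_lt.mpr (hle'.trans hle))
      have hpath : (pathSet6 adj n i s).Nonempty := Set.nonempty_of_ncard_ne_zero hn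
      have hnopath : ∀ g, g ∉ pathSet6 adj' n j t := fun g hg =>
        (pathCount6_ne_zero_iff adj' hfin' n j t).2 ⟨g, hg⟩ hz'
      exact keyVan6 adj adj' v horth'
        (fun a b c d ha hb => hzero a b c d (Or.inr ⟨ha, hb⟩)) hrow n i s j t hpath hnopath
    · exact absurd h hne
    · -- d' < d
      have hNs : {m | pathCount6 adj' m j t ≠ 0}.Nonempty := by
        by_contra hc
        rw [Set.not_nonempty_iff_eq_empty] at hc
        have htop : graphDist6 adj' j t = ⊤ := by
          rw [graphDist6, iInf_eq_top]
          intro m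
          rw [iInf_eq_top]
          intro hm
          exact absurd (Set.eq_empty_iff_forall_notMem.mp hc m hm) (fun h => h)
        rw [htop] at h
        exact absurd h (not_lt.mpr le_top)
      set n := sInf {m | pathCount6 adj' m j t ≠ 0} with hndef
      have hn : pathCount6 adj' n j t ≠ 0 := Nat.sInf_mem hNs
      have hle : (n : ℕ∞) ≤ graphDist6 adj' j t := by
        rw [graphDist6]
        refine le_iInf fun m => le_iInf fun hm => ?_
        exact_mod_cast Nat.sInf_le hm
      have hz' : pathCount6 adj n i s = 0 := by
        by_contra hc
        have hle' : graphDist6 adj i s ≤ (n : ℕ∞) := by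
          rw [graphDist6]
          exact iInf_le_of_le n (iInf_le _ hc)
        exact absurd h (not_lt.mpr (hle'.trans hle))
      have hpath : (pathSet6 adj' n j t).Nonempty := Set.nonempty_of_ncard_ne_zero hn
      have hnopath : ∀ g, g ∉ pathSet6 adj n i s := fun g hg =>
        (pathCount6_ne_zero_iff adj hfin n i s).2 ⟨g, hg⟩ hz'
      exact keyVan6 adj' adj (fun (b : I') (a : I) => v a b)
        (fun k t1 t2 hnet => horth t1 t2 k hnet)
        (fun a b c d ha hb => hzero c d a b (Or.inl ⟨ha, hb⟩))
        hcol n j t i s hpath hnopath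
end

section
/- Let I be a countable set and let N be a *-algebra of bounded ℓ^∞(I)-bimodular operators on ℓ²(I^{n+1}) (with bimodule structure (F·ξ·F')(i) = F(i_0) ξ(i) F'(i_n)). Fix i ∈ I and suppose that the compression map T ↦ T(p_i ⊗ 1^{⊗n}) is injective on N and has finite-rank image for every T ∈ N. Then the functional Tr_ℓ(T) = Tr(T(p_i ⊗ 1^{⊗n})) (ordinary trace of a finite-rank operator) is a trace on N, i.e. Tr_ℓ(TS) = Tr_ℓ(ST) for all T, S ∈ N. -/
/-!
Write `P = p_i ⊗ 1^{⊗n}`. Since `S` commutes with the idempotent `P`, compression is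
multiplicative: `T S P = (T P) (S P)`. It therefore suffices that `Tr (A B) = Tr (B A)` for a
bounded `A` and a finite-rank `B`, the trace being computed in the canonical Hilbert basis.
Expanding `B` in an orthonormal basis `(vⱼ)` of its range and applying Parseval, both sides equal
`∑ⱼ ⟪B A vⱼ, vⱼ⟫` (for `B A` because its range lies in that of `B`).
-/

open scoped InnerProductSpace lp

/-- The Hilbert space `ℓ²(I^{n+1})`. -/
noncomputable abbrev Hsp12 (I : Type*) (n : ℕ) : Type _ :=
  lp (fun _ : Fin (n + 1) → I => ℂ) 2

theorem mul_mul_eq_mul_mul_mul_of_isIdempotentElem {M : Type*} [Semigroup M] {p s : M}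
    (hp : IsIdempotentElem p) (hs : s * p = p * s) (t : M) :
    t * s * p = t * p * (s * p) := by
  rw [← mul_assoc, mul_assoc t p s, ← hs, ← mul_assoc, mul_assoc _ p p, hp.eq]

theorem Submodule.exists_sum_inner_smul_eq {𝕜 H : Type*} [RCLike 𝕜] [NormedAddCommGroup H]
    [InnerProductSpace 𝕜 H] (V : Submodule 𝕜 H) [FiniteDimensional 𝕜 V] :
    ∃ (m : ℕ) (v : Fin m → H), ∀ x ∈ V, ∑ j, ⟪v j, x⟫_𝕜 • v j = x := by
  let ob := stdOrthonormalBasis 𝕜 V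
  refine ⟨_, fun j => ob j, fun x hx => ?_⟩
  simpa using congrArg V.subtype (ob.sum_repr' ⟨x, hx⟩)

namespace HilbertBasis

variable {𝕜 H ι : Type*} [RCLike 𝕜] [NormedAddCommGroup H] [InnerProductSpace 𝕜 H]

theorem default_apply [DecidableEq ι] (i : ι) :
    (default : HilbertBasis ι 𝕜 ℓ²(ι, 𝕜)) i = lp.single 2 i 1 := by
  rw [← HilbertBasis.repr_symm_single]
  rfl

theorem isIdempotentElem_of_apply_eq_ite (b : HilbertBasis ι 𝕜 H) (P : H →L[𝕜] H)
    (q : ι → Prop) [DecidablePred q] (hP : ∀ f, P (b f) = if q f then b f else 0) :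
    IsIdempotentElem P := by
  have hdense : Dense (Submodule.span 𝕜 (Set.range b) : Set H) :=
    Submodule.dense_iff_topologicalClosure_eq_top.mpr b.dense_span
  refine ContinuousLinearMap.ext_on hdense ?_
  rintro _ ⟨f, rfl⟩
  simp only [mul_apply_eq_comp, hP]
  split_ifs with hf
  · rw [hP, if_pos hf]
  · rw [map_zero]

variable [CompleteSpace H]

theorem tsum_inner_mul_apply_eq_sum (b : HilbertBasis ι 𝕜 H) {κ : Type*} [Fintype κ]
    (v : κ → H) (A B : H →L[𝕜] H) (hB : ∀ x, ∑ j, ⟪v j, B x⟫_𝕜 • v j = B x) :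
    ∑' f, ⟪(A * B) (b f), b f⟫_𝕜 = ∑ j, ⟪(B * A) (v j), v j⟫_𝕜 := by
  have hterm : ∀ x, ⟪(A * B) x, x⟫_𝕜
      = ∑ j, ⟪A (v j), x⟫_𝕜 * ⟪x, ContinuousLinearMap.adjoint B (v j)⟫_𝕜 := by
    intro x
    rw [mul_apply_eq_comp, ← hB x, map_sum, sum_inner]
    refine Finset.sum_congr rfl fun j _ => ?_
    rw [map_smul, inner_smul_left, inner_conj_symm, ContinuousLinearMap.adjoint_inner_right,
      mul_comm]
  rw [tsum_congr fun f => hterm (b f),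
    Summable.tsum_finsetSum fun j _ => b.summable_inner_mul_inner _ _]
  refine Finset.sum_congr rfl fun j _ => ?_
  rw [b.tsum_inner_mul_inner, ContinuousLinearMap.adjoint_inner_right,
    mul_apply_eq_comp]

theorem tsum_inner_mul_comm (b : HilbertBasis ι 𝕜 H) (A B : H →L[𝕜] H)
    [FiniteDimensional 𝕜 (LinearMap.range (B : H →ₗ[𝕜] H))] :
    ∑' f, ⟪(A * B) (b f), b f⟫_𝕜 = ∑' f, ⟪(B * A) (b f), b f⟫_𝕜 := by
  obtain ⟨m, v, hv⟩ := (LinearMap.range (B : H →ₗ[𝕜] H)).exists_sum_inner_smul_eq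
  have hB : ∀ x, ∑ j, ⟪v j, B x⟫_𝕜 • v j = B x := fun x =>
    hv _ (LinearMap.mem_range_self _ x)
  calc ∑' f, ⟪(A * B) (b f), b f⟫_𝕜 = ∑ j, ⟪(B * A) (v j), v j⟫_𝕜 :=
        b.tsum_inner_mul_apply_eq_sum v A B hB
    _ = ∑' f, ⟪(1 * (B * A)) (b f), b f⟫_𝕜 :=
        (b.tsum_inner_mul_apply_eq_sum v 1 (B * A) fun x => hB (A x)).symm
    _ = ∑' f, ⟪(B * A) (b f), b f⟫_𝕜 := by rw [one_mul]

end HilbertBasis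

theorem stmt_12_general {I : Type*} [DecidableEq I] (n : ℕ) (i : I)
    (e : (Fin (n + 1) → I) → Hsp12 I n)
    (he : ∀ f, e f = lp.single 2 f (1 : ℂ))
    (Pleft Pright : I → (Hsp12 I n →L[ℂ] Hsp12 I n))
    (hPl : ∀ k f, Pleft k (e f) = if f 0 = k then e f else 0)
    (N : StarSubalgebra ℂ (Hsp12 I n →L[ℂ] Hsp12 I n))
    (hbimod : ∀ T ∈ N, ∀ k : I,
      T ∘L Pleft k = Pleft k ∘L T ∧ T ∘L Pright k = Pright k ∘L T)
    (hfr : ∀ T ∈ N, FiniteDimensional ℂ (LinearMap.range (T ∘L Pleft i : Hsp12 I n →ₗ[ℂ] Hsp12 I n)))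
    (Trl : (Hsp12 I n →L[ℂ] Hsp12 I n) → ℂ)
    (hTrl : ∀ T, Trl T = ∑' f : Fin (n + 1) → I,
      (inner ℂ ((T ∘L Pleft i) (e f)) (e f) : ℂ)) :
    ∀ T ∈ N, ∀ S ∈ N, Trl (T * S) = Trl (S * T) := by
  intro T hT S hS
  let b : HilbertBasis (Fin (n + 1) → I) ℂ (Hsp12 I n) := default
  have hb : ∀ f, b f = e f := fun f => by rw [he, HilbertBasis.default_apply]
  have hP : IsIdempotentElem (Pleft i) :=
    b.isIdempotentElem_of_apply_eq_ite _ (fun f => f 0 = i) fun f => by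
      simpa only [hb] using hPl i f
  have hcompress : ∀ (T' : Hsp12 I n →L[ℂ] Hsp12 I n), ∀ S' ∈ N,
      (T' * S') ∘L Pleft i = (T' ∘L Pleft i) * (S' ∘L Pleft i) := fun T' S' hS' =>
    mul_mul_eq_mul_mul_mul_of_isIdempotentElem hP (hbimod S' hS' i).1 T'
  have htr : ∀ C, Trl C = ∑' f, ⟪(C ∘L Pleft i) (b f), b f⟫_ℂ := fun C => by
    simp only [hTrl, hb]
  have := hfr S hS
  rw [htr, htr, hcompress T S hS, hcompress S T hT]
  exact b.tsum_inner_mul_comm _ _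

/-- Let `N` be a `*`-algebra of bounded `ℓ^∞(I)`-bimodular operators on `ℓ²(I^{n+1})`
(commuting with the left multiplications `Pleft k = p_k ⊗ 1^{⊗n}` and right
multiplications `Pright k = 1^{⊗n} ⊗ p_k`). If the compression `T ↦ T (p_i ⊗ 1^{⊗n})`
is injective on `N` with finite-rank values, then `Tr_ℓ(T) = Tr(T (p_i ⊗ 1^{⊗n}))`
is a trace on `N`: `Tr_ℓ(TS) = Tr_ℓ(ST)`. -/
theorem stmt_12 {I : Type*} [Countable I] [DecidableEq I] (n : ℕ) (i : I)
    (e : (Fin (n + 1) → I) → Hsp12 I n)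
    (he : ∀ f, e f = lp.single 2 f (1 : ℂ))
    (Pleft Pright : I → (Hsp12 I n →L[ℂ] Hsp12 I n))
    (hPl : ∀ k f, Pleft k (e f) = if f 0 = k then e f else 0)
    (hPr : ∀ k f, Pright k (e f) = if f (Fin.last n) = k then e f else 0)
    (N : StarSubalgebra ℂ (Hsp12 I n →L[ℂ] Hsp12 I n))
    (hbimod : ∀ T ∈ N, ∀ k : I,
      T ∘L Pleft k = Pleft k ∘L T ∧ T ∘L Pright k = Pright k ∘L T)
    (hinj : ∀ T ∈ N, ∀ S ∈ N, T ∘L Pleft i = S ∘L Pleft i → T = S)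
    (hfr : ∀ T ∈ N, FiniteDimensional ℂ (LinearMap.range (T ∘L Pleft i : Hsp12 I n →ₗ[ℂ] Hsp12 I n)))
    (Trl : (Hsp12 I n →L[ℂ] Hsp12 I n) → ℂ)
    (hTrl : ∀ T, Trl T = ∑' f : Fin (n + 1) → I,
      (inner ℂ ((T ∘L Pleft i) (e f)) (e f) : ℂ)) :
    ∀ T ∈ N, ∀ S ∈ N, Trl (T * S) = Trl (S * T) :=
  stmt_12_general n i e he Pleft Pright hPl N hbimod hfr Trl hTrl
end

section
/- Let B be a connected graph without loops of constant degree d ≥ 2, and for each v ∈ V(B) let G_v be a finite graph without loops, all with the same number κ of vertices and constant degree f < κ. Let Π be the product graph: its vertex set is the disjoint union of the V(G_v); two vertices of the same G_v are adjacent iff adjacent in G_v; vertices i ∈ V(G_v), j ∈ V(G_w) with v ≠ w are adjacent iff v ∼ w in B. Assume that for all v ≠ w in V(B) there is z ∈ V(B)\{v,w} with z ∼ v and z ≁ w. Writing π: V(Π) → V(B) for the fiber map and T(i,j) = #{k ∈ V(Π): k ∼ i and k ∼ j}, one has: T(i,j) ≥ κd if π(i) = π(j), and T(i,j) ≤ κd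 - 1 if π(i) ≠ π(j). -/
/-- Adjacency in the product graph `Π` over a base graph `B`: two vertices of the same
fiber `G_v` are adjacent iff adjacent in `G_v`; vertices of different fibers `G_v`, `G_w`
are adjacent iff `v ∼ w` in `B`. -/
def adjProd {VB : Type*} {G : VB → Type*} (adjB : VB → VB → Prop)
    (adjG : ∀ v, G v → G v → Prop) (x y : Σ v, G v) : Prop :=
  (∃ h : x.1 = y.1, adjG y.1 (h ▸ x.2) y.2) ∨ (x.1 ≠ y.1 ∧ adjB x.1 y.1)

lemma sigma_fiber_ncard {VB : Type*} {G : VB → Type*} [∀ v, Fintype (G v)]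
    {κ : ℕ} (hκ : ∀ v, Fintype.card (G v) = κ) {A : Set VB} (hA : A.Finite) :
    {k : Σ v, G v | k.1 ∈ A}.Finite ∧ {k : Σ v, G v | k.1 ∈ A}.ncard = A.ncard * κ := by
  classical
  have hset : {k : Σ v, G v | k.1 ∈ A}
      = ↑(hA.toFinset.sigma fun w => (Finset.univ : Finset (G w))) := by
    ext k; simp [Finset.mem_sigma, Set.Finite.mem_toFinset]
  refine ⟨?_, ?_⟩
  · rw [hset]; exact (hA.toFinset.sigma _).finite_toSet
  · rw [hset, Set.ncard_coe_finset, Finset.card_sigma]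
    simp [hκ, Finset.sum_const, Set.ncard_eq_toFinset_card' ]
    exact Or.inl (Set.ncard_eq_toFinset_card A hA).symm

lemma fiber_bound {VB : Type*} {G : VB → Type*} [∀ v, Fintype (G v)]
    (adjB : VB → VB → Prop) (adjG : ∀ v, G v → G v → Prop)
    (x : Σ v, G v) (S : Set (Σ v, G v))
    (hS : ∀ k ∈ S, adjProd adjB adjG k x ∧ k.1 = x.1) :
    S.ncard ≤ {b | adjG x.1 b x.2}.ncard := by
  classical
  set φ : (Σ v, G v) → G x.1 := fun k => if h : k.1 = x.1 then h ▸ k.2 else x.2 with hφ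
  have hkey0 : ∀ (a : VB) (b : G a) (h : a = x.1), (⟨a, b⟩ : Σ v, G v) = ⟨x.1, h ▸ b⟩ := by
    intro a b h; subst h; rfl
  have hkey : ∀ k : Σ v, G v, ∀ h : k.1 = x.1, k = ⟨x.1, h ▸ k.2⟩ := by
    intro k h; rcases k with ⟨a, b⟩; exact hkey0 a b h
  apply Set.ncard_le_ncard_of_injOn φ
  · intro k hk
    obtain ⟨hadj, h1⟩ := hS k hk
    have hk2 : φ k = h1 ▸ k.2 := dif_pos h1
    rcases hadj with ⟨h, hadj⟩ | ⟨hne, _⟩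
    · rw [Set.mem_setOf_eq, hk2]
      exact hadj
    · exact absurd h1 hne
  · intro k hk k' hk' hEq
    obtain ⟨_, h1⟩ := hS k hk
    obtain ⟨_, h1'⟩ := hS k' hk'
    rw [hkey k h1, hkey k' h1']
    simp only [hφ] at hEq
    rw [dif_pos h1, dif_pos h1'] at hEq
    exact congrArg (Sigma.mk x.1) hEq

/-- For the product graph of finite `κ`-vertex, `f`-regular graphs `G_v` (`f < κ`) over a
connected loopless `d`-regular base graph `B` (`d ≥ 2`) satisfying the separation property,
the number `T(i,j)` of common neighbors satisfies `T(i,j) ≥ κd` if `π(i) = π(j)` and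
`T(i,j) ≤ κd - 1` if `π(i) ≠ π(j)`. -/
theorem stmt_15 {VB : Type*} (adjB : VB → VB → Prop)
    {G : VB → Type*} [∀ v, Fintype (G v)]
    (adjG : ∀ v, G v → G v → Prop)
    (d κ f : ℕ) (hd : 2 ≤ d) (hfκ : f < κ)
    (hBirr : ∀ v, ¬ adjB v v) (hBsymm : ∀ v w, adjB v w → adjB w v)
    (hBconn : ∀ v w : VB, Relation.ReflTransGen adjB v w)
    (hBfin : ∀ v, {w | adjB v w}.Finite)
    (hBdeg : ∀ v, {w | adjB v w}.ncard = d)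
    (hκ : ∀ v, Fintype.card (G v) = κ)
    (hGirr : ∀ v (a : G v), ¬ adjG v a a)
    (hGsymm : ∀ v (a b : G v), adjG v a b → adjG v b a)
    (hGdeg : ∀ v (a : G v), {b | adjG v a b}.ncard = f)
    (hsep : ∀ v w, v ≠ w → ∃ z, z ≠ v ∧ z ≠ w ∧ adjB z v ∧ ¬ adjB z w) :
    ∀ i j : Σ v, G v,
      (i.1 = j.1 →
        κ * d ≤ Set.ncard {k : Σ v, G v | adjProd adjB adjG k i ∧ adjProd adjB adjG k j}) ∧
      (i.1 ≠ j.1 →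
        Set.ncard {k : Σ v, G v | adjProd adjB adjG k i ∧ adjProd adjB adjG k j}
          ≤ κ * d - 1) := by
  classical
  have hfinDv : ∀ v, {z | adjB z v}.Finite := by
    intro v
    have he : {z | adjB z v} = {z | adjB v z} := by
      ext z; exact ⟨hBsymm z v, hBsymm v z⟩
    rw [he]; exact hBfin v
  have hDvcard : ∀ v, {z | adjB z v}.ncard = d := by
    intro v
    have he : {z | adjB z v} = {z | adjB v z} := by
      ext z; exact ⟨hBsymm z v, hBsymm v z⟩
    rw [he]; exact hBdeg v
  have hGdeg' : ∀ (x : Σ v, G v), {b | adjG x.1 b x.2}.ncard = f := by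
    intro x
    have he : {b | adjG x.1 b x.2} = {b | adjG x.1 x.2 b} := by
      ext b; exact ⟨hGsymm _ _ _, hGsymm _ _ _⟩
    rw [he]; exact hGdeg x.1 x.2
  intro i j
  set T := {k : Σ v, G v | adjProd adjB adjG k i ∧ adjProd adjB adjG k j} with hTdef
  constructor
  · -- same fiber: lower bound
    intro heq
    have hDv := hfinDv i.1
    have hsub1 : {k : Σ v, G v | k.1 ∈ {z | adjB z i.1}} ⊆ T := by
      intro k hk
      simp only [Set.mem_setOf_eq] at hk ⊢
      have hne : k.1 ≠ i.1 := fun h => hBirr i.1 (h ▸ hk)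
      refine ⟨Or.inr ⟨hne, hk⟩, Or.inr ⟨?_, ?_⟩⟩
      · rw [← heq]; exact hne
      · rw [← heq]; exact hk
    have hTfin : T.Finite := by
      have hA : (insert i.1 {z | adjB z i.1}).Finite := hDv.insert _
      refine Set.Finite.subset (sigma_fiber_ncard hκ hA).1 ?_
      intro k hk
      simp only [Set.mem_setOf_eq, Set.mem_insert_iff]
      rcases hk.1 with ⟨h, _⟩ | ⟨_, h⟩
      · exact Or.inl h
      · exact Or.inr h
    calc κ * d = {z | adjB z i.1}.ncard * κ := by rw [hDvcard, Nat.mul_comm]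
      _ = {k : Σ v, G v | k.1 ∈ {z | adjB z i.1}}.ncard := (sigma_fiber_ncard hκ hDv).2.symm
      _ ≤ T.ncard := Set.ncard_le_ncard hsub1 hTfin
  · -- different fibers: upper bound
    intro hij
    set C := {z | adjB z i.1 ∧ adjB z j.1} with hCdef
    have hCfin : C.Finite := (hfinDv i.1).subset (fun z hz => hz.1)
    obtain ⟨z₀, hz₀v, hz₀w, hz₀adj, hz₀nadj⟩ := hsep i.1 j.1 hij
    set P1 := {k ∈ T | k.1 = i.1} with hP1def
    set P2 := {k ∈ T | k.1 = j.1} with hP2def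
    set SC := {k : Σ v, G v | k.1 ∈ C} with hSCdef
    have hdecomp : T ⊆ P1 ∪ P2 ∪ SC := by
      intro k hk
      by_cases h1 : k.1 = i.1
      · exact Or.inl (Or.inl ⟨hk, h1⟩)
      by_cases h2 : k.1 = j.1
      · exact Or.inl (Or.inr ⟨hk, h2⟩)
      refine Or.inr ?_
      obtain ⟨hki, hkj⟩ := hk
      rcases hki with ⟨h, _⟩ | ⟨_, hadj1⟩
      · exact absurd h h1
      rcases hkj with ⟨h, _⟩ | ⟨_, hadj2⟩
      · exact absurd h h2
      exact ⟨hadj1, hadj2⟩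
    have hP1fin : P1.Finite := by
      refine Set.Finite.subset (sigma_fiber_ncard hκ (Set.finite_singleton i.1)).1 ?_
      intro k hk; exact hk.2
    have hP2fin : P2.Finite := by
      refine Set.Finite.subset (sigma_fiber_ncard hκ (Set.finite_singleton j.1)).1 ?_
      intro k hk; exact hk.2
    have hSCfin : SC.Finite := (sigma_fiber_ncard hκ hCfin).1
    have hSCcard : SC.ncard = C.ncard * κ := (sigma_fiber_ncard hκ hCfin).2
    have hP1card : P1.ncard ≤ f := by
      rw [← hGdeg' i]
      exact fiber_bound adjB adjG i P1 (fun k hk => ⟨hk.1.1, hk.2⟩)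
    have hP2card : P2.ncard ≤ f := by
      rw [← hGdeg' j]
      exact fiber_bound adjB adjG j P2 (fun k hk => ⟨hk.1.2, hk.2⟩)
    have hTle : T.ncard ≤ P1.ncard + P2.ncard + SC.ncard := by
      calc T.ncard ≤ (P1 ∪ P2 ∪ SC).ncard :=
            Set.ncard_le_ncard hdecomp (((hP1fin.union hP2fin).union hSCfin))
        _ ≤ (P1 ∪ P2).ncard + SC.ncard := Set.ncard_union_le _ _
        _ ≤ P1.ncard + P2.ncard + SC.ncard := by
            exact Nat.add_le_add_right (Set.ncard_union_le _ _) _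
    have hκpos : 1 ≤ κ := Nat.lt_of_le_of_lt (Nat.zero_le f) hfκ
    by_cases hadjvw : adjB i.1 j.1
    · -- adjacent base vertices
      have hwC : j.1 ∉ C := fun h => hBirr j.1 h.2
      have hz₀C : z₀ ∉ insert j.1 C := by
        intro h
        rcases h with h | h
        · exact hz₀w h
        · exact hz₀nadj h.2
      have hsubD : insert z₀ (insert j.1 C) ⊆ {z | adjB z i.1} := by
        intro z hz
        rcases hz with h | h | h
        · rw [h]; exact hz₀adj
        · rw [h]; exact hBsymm _ _ hadjvw
        · exact h.1
      have hCd : C.ncard + 2 ≤ d := by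
        have h1 : (insert z₀ (insert j.1 C)).ncard = C.ncard + 2 := by
          rw [Set.ncard_insert_of_notMem hz₀C (hCfin.insert _),
            Set.ncard_insert_of_notMem hwC hCfin]
        have h2 : (insert z₀ (insert j.1 C)).ncard ≤ d := by
          rw [← hDvcard i.1]
          exact Set.ncard_le_ncard hsubD (hfinDv i.1)
        omega
      have hmul : (C.ncard + 2) * κ ≤ d * κ := Nat.mul_le_mul_right κ hCd
      have : T.ncard < κ * d := by
        have h3 : T.ncard ≤ f + f + C.ncard * κ := by
          calc T.ncard ≤ P1.ncard + P2.ncard + SC.ncard := hTle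
            _ ≤ f + f + C.ncard * κ := by rw [hSCcard]; omega
        have h4 : C.ncard * κ + 2 * κ ≤ d * κ := by
          calc C.ncard * κ + 2 * κ = (C.ncard + 2) * κ := by ring
            _ ≤ d * κ := hmul
        have h5 : κ * d = d * κ := Nat.mul_comm _ _
        omega
      exact Nat.le_sub_one_of_lt this
    · -- non-adjacent base vertices
      have hP1empty : P1 = ∅ := by
        ext k
        simp only [hP1def, Set.mem_setOf_eq, Set.mem_empty_iff_false, iff_false]
        rintro ⟨⟨hki, hkj⟩, h1⟩
        rcases hkj with ⟨h, _⟩ | ⟨_, hadj⟩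
        · exact hij (h1 ▸ h)
        · exact hadjvw (h1 ▸ hadj)
      have hP2empty : P2 = ∅ := by
        ext k
        simp only [hP2def, Set.mem_setOf_eq, Set.mem_empty_iff_false, iff_false]
        rintro ⟨⟨hki, hkj⟩, h2⟩
        rcases hki with ⟨h, _⟩ | ⟨_, hadj⟩
        · exact hij (h2 ▸ h).symm
        · exact hadjvw (hBsymm _ _ (h2 ▸ hadj))
      have hz₀C : z₀ ∉ C := fun h => hz₀nadj h.2
      have hsubD : insert z₀ C ⊆ {z | adjB z i.1} := by
        intro z hz
        rcases hz with h | h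
        · rw [h]; exact hz₀adj
        · exact h.1
      have hCd : C.ncard + 1 ≤ d := by
        have h1 : (insert z₀ C).ncard = C.ncard + 1 :=
          Set.ncard_insert_of_notMem hz₀C hCfin
        have h2 : (insert z₀ C).ncard ≤ d := by
          rw [← hDvcard i.1]
          exact Set.ncard_le_ncard hsubD (hfinDv i.1)
        omega
      have hmul : (C.ncard + 1) * κ ≤ d * κ := Nat.mul_le_mul_right κ hCd
      have : T.ncard < κ * d := by
        have h3 : T.ncard ≤ C.ncard * κ := by
          have := hTle
          rw [hP1empty, hP2empty, Set.ncard_empty, hSCcard] at this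
          omega
        have h4 : C.ncard * κ + 1 * κ ≤ d * κ := by
          calc C.ncard * κ + 1 * κ = (C.ncard + 1) * κ := by ring
            _ ≤ d * κ := hmul
        have h5 : κ * d = d * κ := Nat.mul_comm _ _
        omega
      exact Nat.le_sub_one_of_lt this
end
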